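/- Let β ∈ (0,1), δ₁, δ₂ ∈ (1/(2-β), 2/(3-β)) with δ₂ ≤ δ₁, and let ε₁ ≥ ε₂ in (0,1) satisfy (1+εᵢ)/(2+εᵢ-β) = δᵢ. Let g : ℝ → ℝ be continuous with g(0)=0, c₁ y^{δ₁} ≤ g(y) ≤ c₂ y^{δ₂} for y ∈ [0,1]. Let Y₁, Y₂ ≥ 1 and T ∈ (0,1) satisfy (Y₁+Y₂)(1-T)^{2-β} < 1-β and 8Y₁ ≤ c₁ ≤ c₂ ≤ (1-β)Y₂^{1-δ₂}. Then for every y ∈ C([T,1],ℝ) with Y₁(t-T)^{1+ε₁} ≤ y(t) ≤ Y₂(t-T)^{1+ε₂} on [T,1], the function t ↦ g(∫_T^t y(s)(t-s)^{-β} ds) also satisfies Y₁(t-T)^{1+ε₁} ≤ g(∫_T^t y(s)(t-s)^{-β} ds) ≤ Y₂(t-T)^{1+ε₂} on [T,1]. -/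

import Mathlib

/-!
Write `I(t) = ∫_T^t y(s) (t-s)^{-β} ds` and `a = t - T`. The kernel integrates to
`∫_u^t (t-s)^{-β} ds = (t-u)^{1-β}/(1-β)`, so the upper bound on `y` gives
`I ≤ Y₂ a^{2+ε₂-β}/(1-β)`, and the lower bound on `y` over the right half `[T + a/2, t]` gives
`I ≥ Y₁ (a/2)^{2+ε₁-β}/(1-β)`. The smallness of `1 - T` puts `I` in `[0,1]`, where the bounds on
`g` apply, and since `(2+εᵢ-β) δᵢ = 1+εᵢ` raising these to the power `δᵢ` returns exactly the
exponents `1+εᵢ`; the conditions on `c₁, c₂` absorb the remaining constants.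
-/

open MeasureTheory intervalIntegral Set

noncomputable def abelIntegral (β T : ℝ) (y : ℝ → ℝ) (t : ℝ) : ℝ :=
  ∫ s in T..t, y s * (t - s) ^ (-β)

section AbelIntegral

variable {β T t : ℝ} {y : ℝ → ℝ}

lemma intervalIntegrable_sub_rpow_neg (hβ : β < 1) (u t : ℝ) :
    IntervalIntegrable (fun s => (t - s) ^ (-β)) volume u t := by
  simpa using
    (intervalIntegrable_rpow' (a := t - u) (b := 0) (by linarith : -1 < -β)).comp_sub_left t

lemma integral_sub_rpow_neg (hβ : β < 1) (u t : ℝ) :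
    ∫ s in u..t, (t - s) ^ (-β) = (t - u) ^ (1 - β) / (1 - β) := by
  rw [integral_comp_sub_left (fun x => x ^ (-β)) t, sub_self, integral_rpow (Or.inl (by linarith)),
    Real.zero_rpow (by linarith), sub_zero, neg_add_eq_sub]

lemma intervalIntegrable_mul_sub_rpow_neg (hβ : β < 1) (hTt : T ≤ t)
    (hy : ContinuousOn y (Icc T t)) :
    IntervalIntegrable (fun s => y s * (t - s) ^ (-β)) volume T t :=
  (intervalIntegrable_sub_rpow_neg hβ T t).continuousOn_mul (by rwa [uIcc_of_le hTt])

lemma abelIntegral_le {C : ℝ} (hβ : β < 1) (hTt : T ≤ t) (hy : ContinuousOn y (Icc T t))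
    (hC : ∀ s ∈ Icc T t, y s ≤ C) :
    abelIntegral β T y t ≤ C * ((t - T) ^ (1 - β) / (1 - β)) := by
  rw [← integral_sub_rpow_neg hβ, ← intervalIntegral.integral_const_mul]
  refine integral_mono_on hTt (intervalIntegrable_mul_sub_rpow_neg hβ hTt hy)
    ((intervalIntegrable_sub_rpow_neg hβ T t).const_mul C) fun s hs => ?_
  exact mul_le_mul_of_nonneg_right (hC s hs) (Real.rpow_nonneg (sub_nonneg.2 hs.2) _)

lemma le_abelIntegral {C : ℝ} (hβ : β < 1) (hTt : T ≤ t) (hy : ContinuousOn y (Icc T t))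
    (hC : ∀ s ∈ Icc T t, C ≤ y s) :
    C * ((t - T) ^ (1 - β) / (1 - β)) ≤ abelIntegral β T y t := by
  rw [← integral_sub_rpow_neg hβ, ← intervalIntegral.integral_const_mul]
  refine integral_mono_on hTt ((intervalIntegrable_sub_rpow_neg hβ T t).const_mul C)
    (intervalIntegrable_mul_sub_rpow_neg hβ hTt hy) fun s hs => ?_
  exact mul_le_mul_of_nonneg_right (hC s hs) (Real.rpow_nonneg (sub_nonneg.2 hs.2) _)

lemma abelIntegral_le_of_le_mul_rpow {Y p : ℝ} (hβ : β < 1) (hTt : T ≤ t)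
    (hy : ContinuousOn y (Icc T t)) (hY : 0 ≤ Y) (hp : 0 ≤ p)
    (hyY : ∀ s ∈ Icc T t, y s ≤ Y * (s - T) ^ p) :
    abelIntegral β T y t ≤ Y * (t - T) ^ (p + (1 - β)) / (1 - β) := by
  have hbound : ∀ s ∈ Icc T t, y s ≤ Y * (t - T) ^ p := fun s hs =>
    (hyY s hs).trans <| mul_le_mul_of_nonneg_left
      (Real.rpow_le_rpow (sub_nonneg.2 hs.1) (by linarith [hs.2]) hp) hY
  calc abelIntegral β T y t ≤ Y * (t - T) ^ p * ((t - T) ^ (1 - β) / (1 - β)) :=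
        abelIntegral_le hβ hTt hy hbound
    _ = Y * (t - T) ^ (p + (1 - β)) / (1 - β) := by
        rw [Real.rpow_add' (sub_nonneg.2 hTt) (by linarith)]; ring

lemma le_abelIntegral_of_mul_rpow_le {Y p : ℝ} (hβ : β < 1) (hTt : T ≤ t)
    (hy : ContinuousOn y (Icc T t)) (hY : 0 ≤ Y) (hp : 0 ≤ p)
    (hYy : ∀ s ∈ Icc T t, Y * (s - T) ^ p ≤ y s) :
    Y * ((t - T) / 2) ^ (p + (1 - β)) / (1 - β) ≤ abelIntegral β T y t := by
  set m := (T + t) / 2 with hm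
  have hTm : T ≤ m := by linarith [hm]
  have hmt : m ≤ t := by linarith [hm]
  have hbound : ∀ s ∈ Icc m t, Y * ((t - T) / 2) ^ p ≤ y s := fun s hs =>
    (mul_le_mul_of_nonneg_left
      (Real.rpow_le_rpow (by linarith) (by linarith [hs.1, hm]) hp) hY).trans
      (hYy s ⟨hTm.trans hs.1, hs.2⟩)
  have hintegrand_nonneg : ∀ s ∈ Icc T t, 0 ≤ y s * (t - s) ^ (-β) := fun s hs =>
    mul_nonneg ((mul_nonneg hY (Real.rpow_nonneg (sub_nonneg.2 hs.1) p)).trans (hYy s hs))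
      (Real.rpow_nonneg (sub_nonneg.2 hs.2) _)
  calc Y * ((t - T) / 2) ^ (p + (1 - β)) / (1 - β)
        = Y * ((t - T) / 2) ^ p * ((t - m) ^ (1 - β) / (1 - β)) := by
        rw [show t - m = (t - T) / 2 by ring, Real.rpow_add' (by linarith) (by linarith)]; ring
    _ ≤ abelIntegral β m y t := le_abelIntegral hβ hmt (hy.mono (Icc_subset_Icc_left hTm)) hbound
    _ ≤ abelIntegral β T y t :=
        integral_mono_interval hTm hmt le_rfl
          ((ae_restrict_mem measurableSet_Ioc).mono fun s hs =>
            hintegrand_nonneg s (Ioc_subset_Icc_self hs))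
          (intervalIntegrable_mul_sub_rpow_neg hβ hTt hy)

end AbelIntegral

section PowerBounds

variable {β p δ Y a : ℝ}

lemma mul_rpow_div_rpow_eq (hβ : β < 1) (hp : 0 ≤ p) (hY : 0 ≤ Y) (ha : 0 ≤ a)
    (hδ : p / (p + (1 - β)) = δ) :
    (Y * a ^ (p + (1 - β)) / (1 - β)) ^ δ = (Y / (1 - β)) ^ δ * a ^ p := by
  have hqδ : (p + (1 - β)) * δ = p := by
    rw [← hδ, mul_div_cancel₀ p (by linarith : 0 < p + (1 - β)).ne']
  rw [mul_div_right_comm, Real.mul_rpow (div_nonneg hY (by linarith)) (by positivity),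
    ← Real.rpow_mul ha, hqδ]

lemma mul_rpow_le_mul_rpow_of_ge {c I : ℝ} (hβ : β < 1) (hp0 : 0 ≤ p) (hp2 : p ≤ 2)
    (hδ : p / (p + (1 - β)) = δ) (hY : 1 - β ≤ Y) (hc : 4 * Y ≤ c) (ha : 0 ≤ a)
    (hI : Y * (a / 2) ^ (p + (1 - β)) / (1 - β) ≤ I) :
    Y * a ^ p ≤ c * I ^ δ := by
  have h1β : 0 < 1 - β := by linarith
  have hδ0 : 0 ≤ δ := hδ ▸ div_nonneg hp0 (by linarith)
  have hc0 : 0 ≤ c := by linarith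
  have hap : 0 ≤ a ^ p := Real.rpow_nonneg ha p
  have h2p : (2 : ℝ) ^ p ≤ 4 := by
    calc (2 : ℝ) ^ p ≤ 2 ^ (2 : ℝ) := Real.rpow_le_rpow_of_exponent_le one_le_two hp2
      _ = 4 := by norm_num
  have hY0 : 0 ≤ Y * (a / 2) ^ (p + (1 - β)) / (1 - β) :=
    div_nonneg (mul_nonneg (by linarith) (Real.rpow_nonneg (by linarith) _)) h1β.le
  calc Y * a ^ p = 4 * Y * (a ^ p / 4) := by ring
    _ ≤ c * (a ^ p / 2 ^ p) :=
        mul_le_mul hc (div_le_div_of_nonneg_left hap (by positivity) h2p) (by positivity) hc0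
    _ = c * (a / 2) ^ p := by rw [Real.div_rpow ha zero_le_two]
    _ ≤ c * ((Y / (1 - β)) ^ δ * (a / 2) ^ p) := by
        refine mul_le_mul_of_nonneg_left (le_mul_of_one_le_left (by positivity) ?_) hc0
        exact Real.one_le_rpow ((one_le_div h1β).2 hY) hδ0
    _ = c * (Y * (a / 2) ^ (p + (1 - β)) / (1 - β)) ^ δ := by
        rw [mul_rpow_div_rpow_eq hβ hp0 (by linarith) (by linarith) hδ]
    _ ≤ c * I ^ δ :=
        mul_le_mul_of_nonneg_left (Real.rpow_le_rpow hY0 hI hδ0) hc0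

lemma mul_rpow_le_mul_rpow_of_le {c I : ℝ} (hβ0 : 0 ≤ β) (hβ1 : β < 1) (hp : 0 ≤ p)
    (hδ : p / (p + (1 - β)) = δ) (hY : 0 < Y) (hc0 : 0 ≤ c) (hc : c ≤ (1 - β) * Y ^ (1 - δ))
    (ha : 0 ≤ a) (hI0 : 0 ≤ I) (hI : I ≤ Y * a ^ (p + (1 - β)) / (1 - β)) :
    c * I ^ δ ≤ Y * a ^ p := by
  have h1β : 0 < 1 - β := by linarith
  have hδ0 : 0 ≤ δ := hδ ▸ div_nonneg hp (by linarith)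
  have hδ1 : δ ≤ 1 := hδ ▸ div_le_one_of_le₀ (by linarith) (by linarith)
  have hcY : c * (Y / (1 - β)) ^ δ ≤ Y := by
    have hYsplit : Y ^ (1 - δ) * Y ^ δ = Y := by
      rw [← Real.rpow_add hY, sub_add_cancel, Real.rpow_one]
    calc c * (Y / (1 - β)) ^ δ ≤ (1 - β) * Y ^ (1 - δ) * (Y / (1 - β)) ^ δ :=
          mul_le_mul_of_nonneg_right hc (by positivity)
      _ = (1 - β) / (1 - β) ^ δ * (Y ^ (1 - δ) * Y ^ δ) := by
          rw [Real.div_rpow hY.le h1β.le]; ring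
      _ = (1 - β) ^ (1 - δ) * Y := by rw [hYsplit, Real.rpow_sub h1β, Real.rpow_one]
      _ ≤ Y := mul_le_of_le_one_left hY.le (Real.rpow_le_one h1β.le (by linarith) (by linarith))
  calc c * I ^ δ ≤ c * (Y * a ^ (p + (1 - β)) / (1 - β)) ^ δ :=
        mul_le_mul_of_nonneg_left (Real.rpow_le_rpow hI0 hI hδ0) hc0
    _ = c * (Y / (1 - β)) ^ δ * a ^ p := by
        rw [mul_rpow_div_rpow_eq hβ1 hp hY.le ha hδ]; ring
    _ ≤ Y * a ^ p := mul_le_mul_of_nonneg_right hcY (Real.rpow_nonneg ha p)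

lemma mul_rpow_div_le_one {b : ℝ} (hβ : β < 1) (hp : 1 ≤ p) (hY : 0 ≤ Y) (ha : 0 ≤ a)
    (hab : a ≤ b) (hb : b ≤ 1) (hsmall : Y * b ^ (2 - β) ≤ 1 - β) :
    Y * a ^ (p + (1 - β)) / (1 - β) ≤ 1 := by
  rw [div_le_one (by linarith)]
  refine le_trans (mul_le_mul_of_nonneg_left ?_ hY) hsmall
  calc a ^ (p + (1 - β)) ≤ a ^ (2 - β) :=
        Real.rpow_le_rpow_of_exponent_ge' ha (hab.trans hb) (by linarith) (by linarith)
    _ ≤ b ^ (2 - β) := Real.rpow_le_rpow ha hab (by linarith)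

end PowerBounds

theorem operator_invariance_general (β δ₁ δ₂ ε₁ ε₂ c₁ c₂ Y₁ Y₂ T : ℝ) (g : ℝ → ℝ)
    (hβ : β ∈ Set.Ioo (0:ℝ) 1)
    (hε₁ : ε₁ ∈ Set.Ioo (0:ℝ) 1) (hε₂ : ε₂ ∈ Set.Ioo (0:ℝ) 1)
    (heq₁ : (1 + ε₁) / (2 + ε₁ - β) = δ₁) (heq₂ : (1 + ε₂) / (2 + ε₂ - β) = δ₂)
    (hg_bd : ∀ u ∈ Set.Icc (0:ℝ) 1, c₁ * u ^ δ₁ ≤ g u ∧ g u ≤ c₂ * u ^ δ₂)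
    (hY₁ : 1 ≤ Y₁) (hY₂ : 1 ≤ Y₂) (hT : T ∈ Set.Ioo (0:ℝ) 1)
    (hsmall : (Y₁ + Y₂) * (1 - T) ^ (2 - β) < 1 - β)
    (hc : 8 * Y₁ ≤ c₁ ∧ c₁ ≤ c₂ ∧ c₂ ≤ (1 - β) * Y₂ ^ (1 - δ₂))
    (y : ℝ → ℝ) (hy_cont : ContinuousOn y (Set.Icc T 1))
    (hy_bd : ∀ t ∈ Set.Icc T 1,
      Y₁ * (t - T) ^ (1 + ε₁) ≤ y t ∧ y t ≤ Y₂ * (t - T) ^ (1 + ε₂)) :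
    ∀ t ∈ Set.Icc T 1,
      Y₁ * (t - T) ^ (1 + ε₁) ≤ g (∫ s in T..t, y s * (t - s) ^ (-β)) ∧
        g (∫ s in T..t, y s * (t - s) ^ (-β)) ≤ Y₂ * (t - T) ^ (1 + ε₂) := by
  obtain ⟨hβ0, hβ1⟩ := hβ
  obtain ⟨hc₁, hc₁₂, hc₂⟩ := hc
  have hδ₁ : (1 + ε₁) / (1 + ε₁ + (1 - β)) = δ₁ := by rw [← heq₁]; ring_nf
  have hδ₂ : (1 + ε₂) / (1 + ε₂ + (1 - β)) = δ₂ := by rw [← heq₂]; ring_nf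
  have hY₂_small : Y₂ * (1 - T) ^ (2 - β) ≤ 1 - β := by
    have h1T : 0 ≤ 1 - T := by linarith [hT.2]
    nlinarith [mul_nonneg (by linarith : 0 ≤ Y₁) (Real.rpow_nonneg h1T (2 - β))]
  intro t ⟨hTt, ht1⟩
  have ha : 0 ≤ t - T := sub_nonneg.2 hTt
  have hy : ContinuousOn y (Icc T t) := hy_cont.mono (Icc_subset_Icc_right ht1)
  have hI_ge : Y₁ * ((t - T) / 2) ^ (1 + ε₁ + (1 - β)) / (1 - β) ≤ abelIntegral β T y t :=
    le_abelIntegral_of_mul_rpow_le hβ1 hTt hy (by linarith) (by linarith [hε₁.1])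
      fun s hs => (hy_bd s ⟨hs.1, hs.2.trans ht1⟩).1
  have hI_le : abelIntegral β T y t ≤ Y₂ * (t - T) ^ (1 + ε₂ + (1 - β)) / (1 - β) :=
    abelIntegral_le_of_le_mul_rpow hβ1 hTt hy (by linarith) (by linarith [hε₂.1])
      fun s hs => (hy_bd s ⟨hs.1, hs.2.trans ht1⟩).2
  have hI_nonneg : 0 ≤ abelIntegral β T y t := le_trans (by positivity) hI_ge
  have hI_le_one : abelIntegral β T y t ≤ 1 :=
    hI_le.trans (mul_rpow_div_le_one hβ1 (by linarith [hε₂.1]) (by linarith) ha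
      (by linarith) (by linarith [hT.1]) hY₂_small)
  obtain ⟨hg_ge, hg_le⟩ := hg_bd _ ⟨hI_nonneg, hI_le_one⟩
  exact ⟨(mul_rpow_le_mul_rpow_of_ge hβ1 (by linarith [hε₁.1]) (by linarith [hε₁.2]) hδ₁
      (by linarith) (by linarith) ha hI_ge).trans hg_ge,
    hg_le.trans (mul_rpow_le_mul_rpow_of_le hβ0.le hβ1 (by linarith [hε₂.1]) hδ₂
      (by linarith) (by linarith) hc₂ ha hI_nonneg hI_le)⟩

theorem operator_invariance (β δ₁ δ₂ ε₁ ε₂ c₁ c₂ Y₁ Y₂ T : ℝ) (g : ℝ → ℝ)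
    (hβ : β ∈ Set.Ioo (0:ℝ) 1)
    (hδ₁ : δ₁ ∈ Set.Ioo (1 / (2 - β)) (2 / (3 - β)))
    (hδ₂ : δ₂ ∈ Set.Ioo (1 / (2 - β)) (2 / (3 - β))) (hδord : δ₂ ≤ δ₁)
    (hε₁ : ε₁ ∈ Set.Ioo (0:ℝ) 1) (hε₂ : ε₂ ∈ Set.Ioo (0:ℝ) 1) (hεord : ε₂ ≤ ε₁)
    (heq₁ : (1 + ε₁) / (2 + ε₁ - β) = δ₁) (heq₂ : (1 + ε₂) / (2 + ε₂ - β) = δ₂)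
    (hg_cont : Continuous g) (hg0 : g 0 = 0)
    (hg_bd : ∀ u ∈ Set.Icc (0:ℝ) 1, c₁ * u ^ δ₁ ≤ g u ∧ g u ≤ c₂ * u ^ δ₂)
    (hY₁ : 1 ≤ Y₁) (hY₂ : 1 ≤ Y₂) (hT : T ∈ Set.Ioo (0:ℝ) 1)
    (hsmall : (Y₁ + Y₂) * (1 - T) ^ (2 - β) < 1 - β)
    (hc : 8 * Y₁ ≤ c₁ ∧ c₁ ≤ c₂ ∧ c₂ ≤ (1 - β) * Y₂ ^ (1 - δ₂))
    (y : ℝ → ℝ) (hy_cont : ContinuousOn y (Set.Icc T 1))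
    (hy_bd : ∀ t ∈ Set.Icc T 1,
      Y₁ * (t - T) ^ (1 + ε₁) ≤ y t ∧ y t ≤ Y₂ * (t - T) ^ (1 + ε₂)) :
    ∀ t ∈ Set.Icc T 1,
      Y₁ * (t - T) ^ (1 + ε₁) ≤ g (∫ s in T..t, y s * (t - s) ^ (-β)) ∧
        g (∫ s in T..t, y s * (t - s) ^ (-β)) ≤ Y₂ * (t - T) ^ (1 + ε₂) :=
  operator_invariance_general β δ₁ δ₂ ε₁ ε₂ c₁ c₂ Y₁ Y₂ T g hβ hε₁ hε₂ heq₁ heq₂ hg_bd hY₁ hY₂ hT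
    hsmall hc y hy_cont hy_bd
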